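/- arXiv:2312.17128 — 5 statements merged into one kernel-verified Lean document; each statement's English description precedes it below -/
import Mathlib

section
/- Let R be a semiprime ring admitting an injective ring homomorphism into a semisimple Artinian ring. Then R has only finitely many minimal prime ideals. -/
/-- A ring is semiprime if `a R a = 0` implies `a = 0`. -/
def IsSemiprimeRing' (R : Type*) [Ring R] : Prop :=
  ∀ a : R, (∀ r : R, a * r * a = 0) → a = 0

/-- A two-sided ideal `P` is prime if `P ≠ ⊤` and `a R b ⊆ P` implies `a ∈ P` or `b ∈ P`. -/
def TwoSidedIdeal.IsPrime' {R : Type*} [Ring R] (P : TwoSidedIdeal R) : Prop :=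
  P ≠ ⊤ ∧ ∀ a b : R, (∀ r : R, a * r * b ∈ P) → a ∈ P ∨ b ∈ P

/-- A minimal prime of a ring. -/
def TwoSidedIdeal.IsMinimalPrime' {R : Type*} [Ring R] (P : TwoSidedIdeal R) : Prop :=
  P.IsPrime' ∧ ∀ Q : TwoSidedIdeal R, Q.IsPrime' → Q ≤ P → Q = P

/-!
In a semiprime ring left and right annihilators of a two-sided ideal coincide, and `f` reads the
annihilator of `I` off the left annihilator of `f '' I` in `A`. The Artinian property of `A`
therefore gives the ascending chain condition on annihilator ideals of `R` and rules out infinite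
sequences of nonzero, mutually annihilating ideals. So the annihilators of nonzero ideals lie below
maximal ones; these are prime, their annihilators annihilate each other, so there are finitely
many of them, and their intersection is zero by semiprimeness. A minimal prime contains this finite
intersection, hence one of the maximal annihilators, and equals it by minimality.
-/

def Set.leftAnnihilator {A : Type*} [Ring A] (s : Set A) : Submodule A A :=
  ⨅ x ∈ s, LinearMap.ker (LinearMap.toSpanSingleton A A x)

theorem Set.mem_leftAnnihilator {A : Type*} [Ring A] {s : Set A} {a : A} :
    a ∈ s.leftAnnihilator ↔ ∀ x ∈ s, a * x = 0 := by
  simp [Set.leftAnnihilator]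

theorem Set.leftAnnihilator_anti {A : Type*} [Ring A] {s t : Set A} (h : s ⊆ t) :
    t.leftAnnihilator ≤ s.leftAnnihilator :=
  biInf_mono h

namespace TwoSidedIdeal

variable {R : Type*} [Ring R] {I J C P : TwoSidedIdeal R}

def annihilator (I : TwoSidedIdeal R) : TwoSidedIdeal R :=
  .mk' {r | ∀ x ∈ I, x * r = 0} (fun x _ => mul_zero x)
    (fun ha hb x hx => by rw [mul_add, ha x hx, hb x hx, add_zero])
    (fun ha x hx => by rw [mul_neg, ha x hx, neg_zero])
    (fun {s r} hr x hx => by rw [← mul_assoc, hr _ (I.mul_mem_right x s hx)])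
    (fun hr x hx => by rw [← mul_assoc, hr x hx, zero_mul])

theorem mem_annihilator {r : R} : r ∈ I.annihilator ↔ ∀ x ∈ I, x * r = 0 :=
  mem_mk' ..

theorem annihilator_antitone : Antitone (annihilator (R := R)) :=
  fun _ _ h _ hr => mem_annihilator.2 fun x hx => mem_annihilator.1 hr x (h hx)

def colon (I : TwoSidedIdeal R) (a : R) : TwoSidedIdeal R :=
  .mk' {y | ∀ r, a * r * y ∈ I} (fun r => by rw [mul_zero]; exact I.zero_mem)
    (fun hx hy r => by rw [mul_add]; exact I.add_mem (hx r) (hy r))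
    (fun hx r => by rw [mul_neg]; exact I.neg_mem (hx r))
    (fun {s y} hy r => by rw [← mul_assoc, mul_assoc a]; exact hy (r * s))
    (fun {y s} hy r => by rw [← mul_assoc]; exact I.mul_mem_right _ s (hy r))

theorem mem_colon {a y : R} : y ∈ I.colon a ↔ ∀ r, a * r * y ∈ I :=
  mem_mk' ..

theorem IsPrime'.inf_le (hP : P.IsPrime') (h : I ⊓ J ≤ P) : I ≤ P ∨ J ≤ P := by
  by_contra! hIJ
  obtain ⟨x, hxI, hxP⟩ := SetLike.not_le_iff_exists.1 hIJ.1
  obtain ⟨y, hyJ, hyP⟩ := SetLike.not_le_iff_exists.1 hIJ.2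
  refine (hP.2 x y fun r => h ⟨I.mul_mem_right _ _ (I.mul_mem_right _ _ hxI), ?_⟩).elim hxP hyP
  rw [mul_assoc]
  exact J.mul_mem_left _ _ (J.mul_mem_left _ _ hyJ)

theorem IsPrime'.exists_le_of_sInf_le (hP : P.IsPrime') {s : Set (TwoSidedIdeal R)}
    (hs : s.Finite) (h : sInf s ≤ P) : ∃ C ∈ s, C ≤ P := by
  induction s, hs using Set.Finite.induction_on with
  | empty =>
    rw [sInf_empty, top_le_iff] at h
    exact absurd h hP.1
  | insert _ _ ih =>
    rw [sInf_insert] at h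
    rcases hP.inf_le h with h | h
    · exact ⟨_, Set.mem_insert _ _, h⟩
    · obtain ⟨C, hC, hCP⟩ := ih h
      exact ⟨C, Set.mem_insert_of_mem _ hC, hCP⟩

theorem IsPrime'.annihilator_le (hP : P.IsPrime') (hI : ¬ I ≤ P) : I.annihilator ≤ P := by
  obtain ⟨x, hxI, hxP⟩ := SetLike.not_le_iff_exists.1 hI
  intro y hy
  refine (hP.2 x y fun r => ?_).resolve_left hxP
  rw [mul_assoc, mem_annihilator.1 (I.annihilator.mul_mem_left r y hy) x hxI]
  exact P.zero_mem

def IsAnnihilatorOfNonzero (C : TwoSidedIdeal R) : Prop :=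
  ∃ I : TwoSidedIdeal R, I ≠ ⊥ ∧ I.annihilator = C

section Semiprime

variable (hR : IsSemiprimeRing' R)
include hR

theorem mem_annihilator_iff_forall_mul_eq_zero {r : R} :
    r ∈ I.annihilator ↔ ∀ x ∈ I, r * x = 0 := by
  rw [mem_annihilator]
  constructor
  · intro h x hx
    refine hR _ fun s => ?_
    calc r * x * s * (r * x) = r * (x * s * r) * x := by simp only [mul_assoc]
      _ = 0 := by rw [h _ (I.mul_mem_right x s hx), mul_zero, zero_mul]
  · intro h x hx
    refine hR _ fun s => ?_
    calc x * r * s * (x * r) = x * (r * (s * x)) * r := by simp only [mul_assoc]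
      _ = 0 := by rw [h _ (I.mul_mem_left s x hx), mul_zero, zero_mul]

theorem le_annihilator_comm : I ≤ J.annihilator ↔ J ≤ I.annihilator := by
  constructor
  · intro h y hy
    exact (mem_annihilator_iff_forall_mul_eq_zero hR).2 fun x hx => mem_annihilator.1 (h hx) y hy
  · intro h x hx
    exact (mem_annihilator_iff_forall_mul_eq_zero hR).2 fun y hy => mem_annihilator.1 (h hy) x hx

theorem le_annihilator_annihilator (I : TwoSidedIdeal R) : I ≤ I.annihilator.annihilator :=
  (le_annihilator_comm hR).2 le_rfl

theorem annihilator_annihilator_annihilator (I : TwoSidedIdeal R) :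
    I.annihilator.annihilator.annihilator = I.annihilator :=
  le_antisymm (annihilator_antitone (le_annihilator_annihilator hR I))
    (le_annihilator_annihilator hR _)

theorem eq_zero_of_mem_of_mem_annihilator {x : R} (hx : x ∈ I) (hx' : x ∈ I.annihilator) :
    x = 0 :=
  hR x fun r => mem_annihilator.1 hx' _ (I.mul_mem_right x r hx)

theorem eq_bot_of_le_annihilator (h : I ≤ I.annihilator) : I = ⊥ :=
  eq_bot_iff.2 fun _ hx => (mem_bot _).2 (eq_zero_of_mem_of_mem_annihilator hR hx (h hx))

theorem IsAnnihilatorOfNonzero.annihilator_annihilator (hC : C.IsAnnihilatorOfNonzero) :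
    C.annihilator.annihilator = C := by
  obtain ⟨I, -, rfl⟩ := hC
  exact annihilator_annihilator_annihilator hR I

theorem IsAnnihilatorOfNonzero.annihilator_ne_bot (hC : C.IsAnnihilatorOfNonzero) :
    C.annihilator ≠ ⊥ := by
  obtain ⟨I, hI, rfl⟩ := hC
  exact fun h => hI (eq_bot_iff.2 (h ▸ le_annihilator_annihilator hR I))

theorem isPrime'_of_maximal (hC : Maximal IsAnnihilatorOfNonzero C) : C.IsPrime' := by
  have hclosed := hC.prop.annihilator_annihilator hR
  refine ⟨fun htop => hC.prop.annihilator_ne_bot hR ?_, fun a b hab => ?_⟩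
  · refine eq_bot_of_le_annihilator hR ?_
    rw [hclosed, htop]
    exact le_top
  by_contra! h
  set X := C.annihilator ⊓ C.colon a
  have hX : X ≠ ⊥ := by
    intro hX
    refine h.2 (hclosed ▸ mem_annihilator.2 fun t ht => ?_)
    have htb : t * b ∈ X :=
      ⟨C.annihilator.mul_mem_right _ _ ht, (C.colon a).mul_mem_left _ _ (mem_colon.2 hab)⟩
    rwa [hX, mem_bot] at htb
  have hXC : X.annihilator = C :=
    (hC.eq_of_le ⟨X, hX, rfl⟩ (hclosed ▸ annihilator_antitone inf_le_left)).symm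
  refine h.1 (hXC ▸ mem_annihilator.2 fun x hx => hR _ fun r => ?_)
  have hax : a * r * x = 0 := eq_zero_of_mem_of_mem_annihilator hR (mem_colon.1 hx.2 r)
    (C.annihilator.mul_mem_left _ _ hx.1)
  calc x * a * r * (x * a) = x * (a * r * x) * a := by simp only [mul_assoc]
    _ = 0 := by rw [hax, mul_zero, zero_mul]

variable {A : Type*} [Ring A] {f : R →+* A} (hf : Function.Injective f)
include hf

theorem mem_annihilator_iff_map_mem_leftAnnihilator {r : R} :
    r ∈ I.annihilator ↔ f r ∈ (f '' I).leftAnnihilator := by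
  simp only [mem_annihilator_iff_forall_mul_eq_zero hR, Set.mem_leftAnnihilator,
    Set.forall_mem_image, ← map_mul, map_eq_zero_iff f hf, SetLike.mem_coe]

theorem annihilator_le_of_leftAnnihilator_le
    (h : (f '' J).leftAnnihilator ≤ (f '' I).leftAnnihilator) : J.annihilator ≤ I.annihilator :=
  fun _ hr => (mem_annihilator_iff_map_mem_leftAnnihilator hR hf).2
    (h ((mem_annihilator_iff_map_mem_leftAnnihilator hR hf).1 hr))

variable [IsArtinianRing A]

theorem exists_le_maximal_isAnnihilatorOfNonzero (hC : C.IsAnnihilatorOfNonzero) :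
    ∃ D, C ≤ D ∧ Maximal IsAnnihilatorOfNonzero D := by
  obtain ⟨D, ⟨hD, hCD⟩, hmin⟩ := exists_minimalFor_of_wellFoundedLT
    (fun D => IsAnnihilatorOfNonzero D ∧ C ≤ D) (fun D => (f '' D).leftAnnihilator)
    ⟨C, hC, le_rfl⟩
  refine ⟨D, hCD, hD, fun D' hD' hDD' => ?_⟩
  have h := hmin ⟨hD', hCD.trans hDD'⟩ (Set.leftAnnihilator_anti (Set.image_mono hDD'))
  rw [← hD.annihilator_annihilator hR, ← hD'.annihilator_annihilator hR]
  exact annihilator_antitone (annihilator_le_of_leftAnnihilator_le hR hf h)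

theorem exists_eq_bot_of_le_annihilator_of_lt (T : ℕ → TwoSidedIdeal R)
    (hT : ∀ i j, i < j → T i ≤ (T j).annihilator) : ∃ n, T n = ⊥ := by
  by_contra! hne
  set W := partialSups T
  have hstep (n : ℕ) : (f '' W (n + 1)).leftAnnihilator < (f '' W n).leftAnnihilator := by
    refine lt_of_le_of_ne (Set.leftAnnihilator_anti (Set.image_mono (W.mono n.le_succ)))
      fun heq => hne (n + 1) (eq_bot_of_le_annihilator hR ?_)
    calc T (n + 1) ≤ (W n).annihilator := (le_annihilator_comm hR).1
          (partialSups_le _ _ _ fun i hi => hT i (n + 1) (Nat.lt_succ_of_le hi))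
      _ ≤ (W (n + 1)).annihilator := annihilator_le_of_leftAnnihilator_le hR hf heq.ge
      _ ≤ (T (n + 1)).annihilator := annihilator_antitone (le_partialSups T (n + 1))
  exact not_strictAnti_of_wellFoundedLT _ 
    (strictAnti_nat_of_succ_lt (f := fun n => (f '' W n).leftAnnihilator) hstep)

theorem finite_setOf_maximal_isAnnihilatorOfNonzero :
    {C : TwoSidedIdeal R | Maximal IsAnnihilatorOfNonzero C}.Finite := by
  by_contra hinf
  let e := Set.Infinite.natEmbedding _ hinf
  have hmax (n : ℕ) : Maximal IsAnnihilatorOfNonzero (e n : TwoSidedIdeal R) := (e n).2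
  have horth (i j : ℕ) (hij : i < j) :
      (e i : TwoSidedIdeal R).annihilator ≤ (e j : TwoSidedIdeal R).annihilator.annihilator := by
    have hnle : ¬ (e i : TwoSidedIdeal R) ≤ e j := fun h =>
      hij.ne (e.injective (Subtype.ext ((hmax i).eq_of_le (hmax j).prop h)))
    exact ((isPrime'_of_maximal hR (hmax j)).annihilator_le hnle).trans
      ((hmax j).prop.annihilator_annihilator hR).ge
  obtain ⟨n, hn⟩ := exists_eq_bot_of_le_annihilator_of_lt hR hf _ horth
  exact (hmax n).prop.annihilator_ne_bot hR hn

theorem sInf_setOf_maximal_isAnnihilatorOfNonzero :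
    sInf {C : TwoSidedIdeal R | Maximal IsAnnihilatorOfNonzero C} = ⊥ := by
  by_contra hW
  obtain ⟨D, hWD, hD⟩ := exists_le_maximal_isAnnihilatorOfNonzero hR hf ⟨_, hW, rfl⟩
  refine hD.prop.annihilator_ne_bot hR (eq_bot_of_le_annihilator hR ?_)
  calc D.annihilator ≤ (sInf {C | Maximal IsAnnihilatorOfNonzero C}).annihilator :=
        annihilator_antitone (sInf_le hD)
    _ ≤ D := hWD
    _ = D.annihilator.annihilator := (hD.prop.annihilator_annihilator hR).symm

end Semiprime

end TwoSidedIdeal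

open TwoSidedIdeal in
/-- A semiprime ring admitting an injective ring homomorphism into a semisimple Artinian
ring has only finitely many minimal primes. -/
theorem stmt_4 {R : Type*} [Ring R] (hsp : IsSemiprimeRing' R)
    (A : Type*) [Ring A] [IsSemisimpleRing A] (f : R →+* A)
    (hf : Function.Injective f) :
    {P : TwoSidedIdeal R | P.IsMinimalPrime'}.Finite := by
  have hfin := finite_setOf_maximal_isAnnihilatorOfNonzero hsp hf
  refine hfin.subset fun P hP => ?_
  obtain ⟨C, hC, hCP⟩ := hP.1.exists_le_of_sInf_le hfin
    ((sInf_setOf_maximal_isAnnihilatorOfNonzero hsp hf).trans_le bot_le)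
  exact hP.2 C (isPrime'_of_maximal hsp hC) hCP ▸ hC
end

section
/- Let R be a semiprime ring with finitely many minimal primes and let f : R → A = ∏_{p ∈ min(R)} A(p) be an injective ring homomorphism into a finite product of simple Artinian rings such that for each minimal prime p, the right annihilator of f(p) in A is the component A(p). Then for each p ∈ min(R): (a) the two-sided ideal A f(p) A generated by f(p) equals ∏_{q ≠ p} A(q); (b) A / A f(p) A ≅ A(p); and (c) f⁻¹(A f(p) A) = p, so R/p embeds into A(p). -/
section Aux

variable {ι : Type*} [DecidableEq ι] {B : ι → Type*} [∀ i, MulZeroClass (B i)]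

lemma aux_mul_single (a : ∀ i, B i) (i : ι) (x : B i) :
    a * Pi.single i x = Pi.single i (a i * x) := by
  funext j
  by_cases h : j = i
  · subst h; simp
  · simp [Pi.single_eq_of_ne h]

lemma aux_single_mul (a : ∀ i, B i) (i : ι) (x : B i) :
    Pi.single i x * a = Pi.single i (x * a i) := by
  funext j
  by_cases h : j = i
  · subst h; simp
  · simp [Pi.single_eq_of_ne h]

end Aux

/-- Let `R` be semiprime with finitely many minimal primes and
`f : R → ∏_p A p` a natural injective homomorphism into a finite product of simple
Artinian rings (i.e. `r.ann_A (f p) = A p` for each minimal prime `p`). Then, for each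
minimal prime `p`: (a) the two-sided ideal generated by `f p` is `∏_{q ≠ p} A q`, i.e.
`{a | a p = 0}`; (b) the quotient of `A` by this ideal is isomorphic to `A p`
(the projection onto `A p` is surjective with this ideal as kernel); and
(c) `f⁻¹(A f(p) A) = p`. -/
theorem stmt_12 {R : Type u_1} [Ring R] (hsp : IsSemiprimeRing' R)
    (hfin : {P : TwoSidedIdeal R | P.IsMinimalPrime'}.Finite)
    (A : {P : TwoSidedIdeal R // P.IsMinimalPrime'} → Type u_2)
    [∀ p, Ring (A p)] [∀ p, IsSimpleRing (A p)] [∀ p, IsArtinianRing (A p)]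
    (f : R →+* ∀ p, A p) (hf : Function.Injective f)
    (hnat : ∀ p : {P : TwoSidedIdeal R // P.IsMinimalPrime'},
      {a : ∀ q, A q | ∀ r ∈ p.1, f r * a = 0} = {a : ∀ q, A q | ∀ q, q ≠ p → a q = 0}) :
    ∀ p : {P : TwoSidedIdeal R // P.IsMinimalPrime'},
      ((TwoSidedIdeal.span (⇑f '' (p.1 : Set R)) : Set (∀ q, A q)) =
        {a : ∀ q, A q | a p = 0}) ∧
      (Function.Surjective (Pi.evalRingHom A p) ∧
        (RingHom.ker (Pi.evalRingHom A p) : Set (∀ q, A q)) =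
          (TwoSidedIdeal.span (⇑f '' (p.1 : Set R)) : Set (∀ q, A q)) ∧
        Nonempty ((TwoSidedIdeal.span (⇑f '' (p.1 : Set R))).ringCon.Quotient ≃+* A p)) ∧
      (∀ r : R, f r ∈ TwoSidedIdeal.span (⇑f '' (p.1 : Set R)) ↔ r ∈ p.1) := by
  classical
  have : Finite {P : TwoSidedIdeal R // P.IsMinimalPrime'} := hfin.to_subtype
  have _inst : Fintype {P : TwoSidedIdeal R // P.IsMinimalPrime'} := Fintype.ofFinite _
  -- forward direction: for `r ∈ q`, `(f r) q = 0`
  have hforward : ∀ (q : {P : TwoSidedIdeal R // P.IsMinimalPrime'}) (r : R),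
      r ∈ q.1 → f r q = 0 := by
    intro q r hr
    have h1 : (Pi.single q (1 : A q) : ∀ j, A j) ∈
        {a : ∀ j, A j | ∀ r ∈ q.1, f r * a = 0} := by
      rw [hnat q]
      intro j hj
      exact Pi.single_eq_of_ne hj 1
    have h2 := h1 r hr
    have h3 := congrFun h2 q
    simpa [aux_mul_single] using h3
  intro p
  set I : TwoSidedIdeal (∀ q, A q) := TwoSidedIdeal.span (⇑f '' (p.1 : Set R)) with hI
  -- `Pi.single q 1 ∈ I` for `q ≠ p`
  have hsingle : ∀ q : {P : TwoSidedIdeal R // P.IsMinimalPrime'}, q ≠ p →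
      (Pi.single q (1 : A q) : ∀ j, A j) ∈ I := by
    intro q hq
    -- there is `s ∈ p` with `(f s) q ≠ 0`
    obtain ⟨s, hs, hsq⟩ : ∃ s ∈ p.1, f s q ≠ 0 := by
      by_contra h
      push_neg at h
      have h1 : (Pi.single q (1 : A q) : ∀ j, A j) ∈
          {a : ∀ j, A j | ∀ r ∈ p.1, f r * a = 0} := by
        intro r hr
        rw [aux_mul_single, h r hr, zero_mul, Pi.single_zero]
      rw [hnat p] at h1
      exact one_ne_zero ((h1 q hq).symm ▸ (Pi.single_eq_same q (1 : A q)).symm)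
    -- the set of `x : A q` with `single q x ∈ I` is a two-sided ideal of `A q`
    let J : TwoSidedIdeal (A q) := TwoSidedIdeal.mk'
      {x : A q | (Pi.single q x : ∀ j, A j) ∈ I}
      (by simp [I.zero_mem])
      (fun {x y} hx hy => by simpa [Pi.single_add] using I.add_mem hx hy)
      (fun {x} hx => by simpa [Pi.single_neg] using I.neg_mem hx)
      (fun {x y} hy => by simpa [Pi.single_mul] using I.mul_mem_left (Pi.single q x) _ hy)
      (fun {x y} hx => by simpa [Pi.single_mul] using I.mul_mem_right _ (Pi.single q y) hx)
    have hfsJ : f s q ∈ J := by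
      have h1 : (Pi.single q (1 : A q) : ∀ j, A j) * f s ∈ I :=
        I.mul_mem_left _ _ (TwoSidedIdeal.subset_span ⟨s, hs, rfl⟩)
      rw [aux_single_mul, one_mul] at h1
      simpa [J] using h1
    have h1J : (1 : A q) ∈ J := IsSimpleRing.one_mem_of_ne_zero_mem J hsq hfsJ
    simpa [J] using h1J
  -- part (a)
  have ha : (I : Set (∀ q, A q)) = {a : ∀ q, A q | a p = 0} := by
    ext a
    simp only [SetLike.mem_coe, Set.mem_setOf_eq]
    constructor
    · intro haI
      let K : TwoSidedIdeal (∀ q, A q) := TwoSidedIdeal.mk'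
        {a : ∀ q, A q | a p = 0}
        (by simp)
        (fun {x y} hx hy => by simp_all [Pi.add_apply])
        (fun {x} hx => by simp_all [Pi.neg_apply])
        (fun {x y} hy => by simp_all [Pi.mul_apply])
        (fun {x y} hx => by simp_all [Pi.mul_apply])
      have hsub : (⇑f '' (p.1 : Set R)) ⊆ (K : Set (∀ q, A q)) := by
        rintro _ ⟨r, hr, rfl⟩
        simpa [K] using hforward p r hr
      have := TwoSidedIdeal.mem_span_iff.mp haI K hsub
      simpa [K] using this
    · intro hap
      have hdec : a = ∑ q : {P : TwoSidedIdeal R // P.IsMinimalPrime'},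
          (Pi.single q (a q) : ∀ j, A j) := by
        rw [Finset.univ_sum_single]
      rw [hdec]
      refine I.finsetSum_mem _ _ (fun q _ => ?_)
      by_cases hq : q = p
      · subst hq
        rw [hap, Pi.single_zero]
        exact I.zero_mem
      · have := I.mul_mem_right _ a (hsingle q hq)
        rwa [aux_single_mul, one_mul] at this
  have hmemI : ∀ a : ∀ q, A q, a ∈ I ↔ a p = 0 := by
    intro a
    rw [← SetLike.mem_coe, ha]
    rfl
  -- part (c), hard direction
  have hc : ∀ r : R, f r p = 0 → r ∈ p.1 := by
    -- first find `n ∉ p` lying in every other minimal prime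
    have hex : ∀ s : Finset {P : TwoSidedIdeal R // P.IsMinimalPrime'}, p ∉ s →
        ∃ n : R, n ∉ p.1 ∧ ∀ q ∈ s, n ∈ q.1 := by
      intro s
      induction s using Finset.induction_on with
      | empty =>
        intro _
        refine ⟨1, fun h1 => p.2.1.1 (p.1.one_mem_iff.mp h1), by simp⟩
      | @insert q s' hq ih =>
        intro hps
        have hqp : q ≠ p := fun h => hps (h ▸ Finset.mem_insert_self q s')
        obtain ⟨n, hnp, hns⟩ := ih (fun h => hps (Finset.mem_insert_of_mem h))
        obtain ⟨m, hmq, hmp⟩ : ∃ m ∈ q.1, m ∉ p.1 := by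
          by_contra h
          push_neg at h
          have : q.1 = p.1 := p.2.2 q.1 q.2.1 h
          exact hqp (Subtype.ext this)
        obtain ⟨x, hx⟩ : ∃ x, n * x * m ∉ p.1 := by
          by_contra h
          push_neg at h
          rcases p.2.1.2 n m h with h' | h'
          · exact hnp h'
          · exact hmp h'
        refine ⟨n * x * m, hx, ?_⟩
        intro r hr
        rcases Finset.mem_insert.mp hr with h | h
        · subst h
          exact r.1.mul_mem_left _ _ hmq
        · exact r.1.mul_mem_right _ _ (r.1.mul_mem_right _ _ (hns r h))
    obtain ⟨n, hnp, hn⟩ := hex (Finset.univ.erase p) (Finset.notMem_erase p _)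
    intro r hr
    have key : ∀ x : R, n * x * r ∈ p.1 := by
      intro x
      have hz : f (n * x * r) = 0 := by
        funext j
        by_cases hj : j = p
        · subst hj
          simp [Pi.mul_apply, hr]
        · have : f n j = 0 := hforward j n (hn j (Finset.mem_erase.mpr ⟨hj, Finset.mem_univ j⟩))
          simp [Pi.mul_apply, this]
      have : n * x * r = 0 := hf (by rw [hz, map_zero])
      rw [this]
      exact p.1.zero_mem
    rcases p.2.1.2 n r key with h | h
    · exact absurd h hnp
    · exact h
  refine ⟨ha, ⟨?_, ?_, ?_⟩, ?_⟩
  · intro x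
    exact ⟨Pi.single p x, Pi.single_eq_same p x⟩
  · ext a
    simp only [SetLike.mem_coe, RingHom.mem_ker, ha]
    rfl
  · -- the quotient is isomorphic to `A p`
    have hresp : ∀ a b : ∀ q, A q, I.ringCon a b → a p = b p := by
      intro a b hab
      rw [TwoSidedIdeal.rel_iff] at hab
      have := (hmemI _).mp hab
      simp only [Pi.sub_apply] at this
      exact sub_eq_zero.mp this
    exact ⟨{
      toFun := Quotient.lift (fun a : ∀ q, A q => a p) hresp
      invFun := fun x => ((Pi.single p x : ∀ q, A q) : I.ringCon.Quotient)
      left_inv := by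
        intro x
        induction x using Quotient.inductionOn with
        | h a =>
          refine Quotient.sound (?_ : I.ringCon _ _)
          rw [TwoSidedIdeal.rel_iff, hmemI]
          simp
      right_inv := fun x => Pi.single_eq_same p x
      map_mul' := by
        intro x y
        induction x using Quotient.inductionOn with
        | h a =>
          induction y using Quotient.inductionOn with
          | h b => rfl
      map_add' := by
        intro x y
        induction x using Quotient.inductionOn with
        | h a =>
          induction y using Quotient.inductionOn with
          | h b => rfl
    }⟩
  · intro r
    rw [hmemI]
    exact ⟨hc r, hforward p r⟩
end

section
/- Let R be a semiprime ring, A a semisimple Artinian ring written as A = ∏_{p ∈ min(R)} A(p) with each A(p) simple Artinian, and f : R → A a natural injective homomorphism (i.e., r.ann_A(f(p)) = A(p) for all minimal primes p). If f' : R → A' = ∏_p A'(p) is another such natural monomorphism and α : A → A' is a ring homomorphism with f' = α ∘ f, then α is injective. -/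
/-- If `f : R → A = ∏_p A p` and `f' : R → A' = ∏_p A' p` are natural injective
homomorphisms of a semiprime ring `R` (with finitely many minimal primes) into finite
products of simple Artinian rings, and `α : A → A'` is a ring homomorphism with
`f' = α ∘ f`, then `α` is injective. -/
theorem stmt_13 {R : Type u_1} [Ring R] (hsp : IsSemiprimeRing' R)
    (hfin : {P : TwoSidedIdeal R | P.IsMinimalPrime'}.Finite)
    (A : {P : TwoSidedIdeal R // P.IsMinimalPrime'} → Type u_2)
    [∀ p, Ring (A p)] [∀ p, IsSimpleRing (A p)] [∀ p, IsArtinianRing (A p)]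
    (A' : {P : TwoSidedIdeal R // P.IsMinimalPrime'} → Type u_3)
    [∀ p, Ring (A' p)] [∀ p, IsSimpleRing (A' p)] [∀ p, IsArtinianRing (A' p)]
    (f : R →+* ∀ p, A p) (hf : Function.Injective f)
    (hnat : ∀ p : {P : TwoSidedIdeal R // P.IsMinimalPrime'},
      {a : ∀ q, A q | ∀ r ∈ p.1, f r * a = 0} = {a : ∀ q, A q | ∀ q, q ≠ p → a q = 0})
    (f' : R →+* ∀ p, A' p) (hf' : Function.Injective f')
    (hnat' : ∀ p : {P : TwoSidedIdeal R // P.IsMinimalPrime'},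
      {a : ∀ q, A' q | ∀ r ∈ p.1, f' r * a = 0} = {a : ∀ q, A' q | ∀ q, q ≠ p → a q = 0})
    (α : (∀ p, A p) →+* ∀ p, A' p) (hα : ∀ r : R, α (f r) = f' r) :
    Function.Injective α := by
  classical
  haveI : Fintype {P : TwoSidedIdeal R // P.IsMinimalPrime'} := hfin.fintype
  -- the idempotent supported at `p`
  set e : ∀ p : {P : TwoSidedIdeal R // P.IsMinimalPrime'}, ∀ q, A q :=
    fun p => Pi.single p 1 with he
  -- `α (e p)` vanishes off `p`
  have hvanish : ∀ p q, q ≠ p → α (e p) q = 0 := by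
    intro p q hq
    have h1 : e p ∈ {a : ∀ q, A q | ∀ q, q ≠ p → a q = 0} := by
      intro q hq
      simp [he, Pi.single_apply, hq]
    rw [← hnat p] at h1
    have h2 : α (e p) ∈ {a : ∀ q, A' q | ∀ r ∈ p.1, f' r * a = 0} := by
      intro r hr
      rw [← hα r, ← map_mul, h1 r hr, map_zero]
    rw [hnat' p] at h2
    exact h2 q hq
  -- `α (e p)` is `1` at `p`
  have hone : ∀ p, α (e p) p = 1 := by
    intro p
    have hsum : (∑ q, e q) = (1 : ∀ q, A q) := Finset.univ_sum_single 1
    have : (α (∑ q, e q)) p = 1 := by rw [hsum, map_one]; rfl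
    rw [map_sum] at this
    rw [Finset.sum_apply] at this
    rwa [Finset.sum_eq_single p (fun q _ hq => hvanish q p hq.symm)
      (fun h => absurd (Finset.mem_univ p) h)] at this
  -- now prove injectivity via trivial kernel
  rw [injective_iff_map_eq_zero]
  intro a ha
  funext p
  -- the kernel of `x ↦ α (Pi.single p x)` is a two-sided ideal of `A p`
  set S : Set (A p) := {x : A p | α (Pi.single p x) = 0} with hS
  have hmulL : ∀ {x y : A p}, y ∈ S → x * y ∈ S := by
    intro x y hy
    have : Pi.single p (x * y) = Pi.single p x * Pi.single p y := by
      rw [← Pi.single_mul]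
    simp only [hS, Set.mem_setOf_eq] at hy ⊢
    rw [this, map_mul, hy, mul_zero]
  have hmulR : ∀ {x y : A p}, x ∈ S → x * y ∈ S := by
    intro x y hx
    have : Pi.single p (x * y) = Pi.single p x * Pi.single p y := by
      rw [← Pi.single_mul]
    simp only [hS, Set.mem_setOf_eq] at hx ⊢
    rw [this, map_mul, hx, zero_mul]
  set I : TwoSidedIdeal (A p) := TwoSidedIdeal.mk' S
    (by simp [hS]) (fun {x y} hx hy => by
      simp only [hS, Set.mem_setOf_eq] at hx hy ⊢
      rw [Pi.single_add, map_add, hx, hy, add_zero])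
    (fun {x} hx => by
      simp only [hS, Set.mem_setOf_eq] at hx ⊢
      rw [Pi.single_neg, map_neg, hx, neg_zero])
    (fun {x y} hy => hmulL hy) (fun {x y} hx => hmulR hx) with hI
  -- `a p ∈ I`
  have hmem : a p ∈ I := by
    rw [hI, TwoSidedIdeal.mem_mk']
    have : Pi.single p (a p) = e p * a := by
      funext q
      by_cases hq : q = p
      · subst hq; simp [he, Pi.single_apply]
      · simp [he, Pi.single_apply, hq]
    simp only [hS, Set.mem_setOf_eq]
    rw [this, map_mul, ha, mul_zero]
  -- but `1 ∉ I` since `α (e p) p = 1 ≠ 0`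
  by_contra hap
  have h1 : (1 : A p) ∈ I := IsSimpleRing.one_mem_of_ne_zero_mem I hap hmem
  rw [hI, TwoSidedIdeal.mem_mk'] at h1
  simp only [hS, Set.mem_setOf_eq] at h1
  have : α (e p) p = 0 := by rw [he]; rw [h1]; rfl
  rw [hone p] at this
  exact one_ne_zero this
end

section
/- Let R be a semiprime ring with finitely many minimal primes, let f : R → A = ∏_{p ∈ min(R)} A(p) be an elementary embedding (each A(p) simple Artinian and each A(p) a simple (R, A(p))-bimodule), and let S ⊆ R be a left denominator set consisting of regular elements (ass_l(S) = 0). Then f(S) ⊆ A^×, i.e., every element of S maps to a unit of A. -/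
/-- In an Artinian semisimple ring, a left-regular element is a unit. -/
theorem auxIsUnit' {B : Type*} [Ring B] [IsArtinianRing B] [IsSemisimpleRing B] (u : B)
    (hu : ∀ x : B, u * x = 0 → x = 0) : IsUnit u := by
  obtain ⟨D, hD⟩ := exists_isCompl (Submodule.span B {u})
  have h1 : (1 : B) ∈ Submodule.span B {u} ⊔ D := by rw [hD.sup_eq_top]; exact Submodule.mem_top
  obtain ⟨e, he, d, hd, hed⟩ := Submodule.mem_sup.mp h1
  have hud1 : u * d ∈ D := by simpa using D.smul_mem u hd
  have hud2 : u * d ∈ Submodule.span B {u} := by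
    have h2 : u * d = u - u * e := by
      have h3 : u * e + u * d = u := by rw [← mul_add, hed, mul_one]
      exact eq_sub_of_add_eq' h3
    rw [h2]
    exact sub_mem (Submodule.mem_span_singleton_self u)
      (by simpa using (Submodule.span B {u}).smul_mem u he)
  have hd0 : d = 0 := hu d (Submodule.disjoint_def.mp hD.disjoint _ hud2 hud1)
  have he1 : (1 : B) ∈ Submodule.span B {u} := by rw [← hed, hd0, add_zero]; exact he
  obtain ⟨a, ha⟩ := Submodule.mem_span_singleton.mp he1
  rw [smul_eq_mul] at ha
  have hzero : ∀ x : B, x * a = 0 → x = 0 := by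
    intro x hx
    have : x * (a * u) = 0 := by rw [← mul_assoc, hx, zero_mul]
    rwa [ha, mul_one] at this
  have hinj : Function.Injective (LinearMap.toSpanSingleton B B a) := by
    intro x y hxy
    have hxy' : x * a = y * a := by
      simpa [LinearMap.toSpanSingleton_apply, smul_eq_mul] using hxy
    have : (x - y) * a = 0 := by rw [sub_mul, hxy', sub_self]
    have := hzero _ this
    exact sub_eq_zero.mp this
  obtain ⟨y, hy⟩ := IsArtinian.surjective_of_injective_endomorphism
    (LinearMap.toSpanSingleton B B a) hinj 1
  rw [LinearMap.toSpanSingleton_apply, smul_eq_mul] at hy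
  have hyu : y = u := by
    calc y = y * (a * u) := by rw [ha, mul_one]
    _ = (y * a) * u := by rw [mul_assoc]
    _ = u := by rw [hy, one_mul]
  have hua : u * a = 1 := by rw [← hyu, hy]
  exact ⟨⟨u, a, hua, ha⟩, rfl⟩

/-- A simple Artinian ring is semisimple. -/
theorem auxSemisimple' {B : Type*} [Ring B] [IsSimpleRing B] [IsArtinianRing B] :
    IsSemisimpleRing B := by
  have hatomic : IsAtomic (Submodule B B) :=
    isAtomic_of_orderBot_wellFounded_lt (IsWellFounded.wf)
  apply IsSemisimpleModule.of_sSup_simples_eq_top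
  set N := sSup {m : Submodule B B | IsSimpleModule B m} with hNdef
  have hright : ∀ (b : B), ∀ x ∈ N, x * b ∈ N := by
    intro b
    have hle : N ≤ Submodule.comap (LinearMap.toSpanSingleton B B b) N := by
      apply sSup_le
      intro m hm
      intro x hx
      have hm' : IsSimpleModule B m := hm
      rcases LinearMap.injective_or_eq_zero ((LinearMap.toSpanSingleton B B b).comp m.subtype)
        with hinj | hzero
      · have hsimple : IsSimpleModule B
            (LinearMap.range ((LinearMap.toSpanSingleton B B b).comp m.subtype)) :=
          IsSimpleModule.congr (LinearEquiv.ofInjective _ hinj).symm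
        have hle2 : LinearMap.range ((LinearMap.toSpanSingleton B B b).comp m.subtype) ≤ N :=
          le_sSup hsimple
        exact hle2 ⟨⟨x, hx⟩, rfl⟩
      · have h0 : ((LinearMap.toSpanSingleton B B b).comp m.subtype) ⟨x, hx⟩ = 0 := by
          rw [hzero]; rfl
        show (LinearMap.toSpanSingleton B B b) x ∈ N
        have : (LinearMap.toSpanSingleton B B b) x
            = ((LinearMap.toSpanSingleton B B b).comp m.subtype) ⟨x, hx⟩ := rfl
        rw [this, h0]
        exact N.zero_mem
    intro x hx
    have := hle hx
    simpa [Submodule.mem_comap, LinearMap.toSpanSingleton_apply, smul_eq_mul] using this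
  rcases hatomic.eq_bot_or_exists_atom_le (⊤ : Submodule B B) with htop | ⟨I, hI, _⟩
  · exfalso
    have : (1 : B) ∈ (⊥ : Submodule B B) := htop ▸ Submodule.mem_top
    exact one_ne_zero ((Submodule.mem_bot B).mp this)
  · have hIN : I ≤ N := le_sSup (isSimpleModule_iff_isAtom.mpr hI)
    obtain ⟨z, hzI, hz0⟩ := Submodule.exists_mem_ne_zero_of_ne_bot hI.1
    let J := TwoSidedIdeal.mk' (N : Set B) N.zero_mem (fun h1 h2 => N.add_mem h1 h2)
      (fun h => N.neg_mem h) (fun {x y} h => by simpa using N.smul_mem x h)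
      (fun {x y} h => hright y x h)
    have hJ : J = ⊤ := by
      rcases eq_bot_or_eq_top J with hb | ht
      · exfalso
        have : z ∈ J := by rw [TwoSidedIdeal.mem_mk']; exact hIN hzI
        rw [hb, TwoSidedIdeal.mem_bot] at this
        exact hz0 this
      · exact ht
    have h1N : (1 : B) ∈ N := by
      have : (1 : B) ∈ J := hJ ▸ TwoSidedIdeal.mem_top B
      rwa [TwoSidedIdeal.mem_mk'] at this
    rw [eq_top_iff]
    intro x _
    have : x • (1 : B) ∈ N := N.smul_mem x h1N
    simpa using this

/-- Let `R` be semiprime with finitely many minimal primes,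
`f : R → ∏_p A p` an elementary embedding into a finite product of simple Artinian rings
(natural, and each `A p` a simple `(R, A p)`-bimodule), and `S` a left Ore set of regular
elements of `R`. Then every element of `S` maps to a unit of `∏_p A p`. -/
theorem stmt_14 {R : Type u_1} [Ring R] (hsp : IsSemiprimeRing' R)
    (hfin : {P : TwoSidedIdeal R | P.IsMinimalPrime'}.Finite)
    (A : {P : TwoSidedIdeal R // P.IsMinimalPrime'} → Type u_2)
    [∀ p, Ring (A p)] [∀ p, IsSimpleRing (A p)] [∀ p, IsArtinianRing (A p)]
    (f : R →+* ∀ p, A p) (hf : Function.Injective f)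
    (hnat : ∀ p : {P : TwoSidedIdeal R // P.IsMinimalPrime'},
      {a : ∀ q, A q | ∀ r ∈ p.1, f r * a = 0} = {a : ∀ q, A q | ∀ q, q ≠ p → a q = 0})
    (helem : ∀ (p : {P : TwoSidedIdeal R // P.IsMinimalPrime'}) (W : AddSubgroup (A p)),
      (∀ r : R, ∀ w ∈ W, f r p * w ∈ W) → (∀ b : A p, ∀ w ∈ W, w * b ∈ W) →
      W = ⊥ ∨ W = ⊤)
    (S : Submonoid R)
    (hreg : ∀ s ∈ S, IsRegular s)
    (hOre : ∀ (r : R), ∀ s ∈ S, ∃ s' ∈ S, ∃ r' : R, s' * r = r' * s) :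
    ∀ s ∈ S, IsUnit (f s) := by
  classical
  -- p.1 ⊆ {r | f r p = 0}
  have hPK : ∀ (q : {P : TwoSidedIdeal R // P.IsMinimalPrime'}), ∀ y ∈ q.1, f y q = 0 := by
    intro q y hy
    have h1 : (Pi.single q (1 : A q) : ∀ p, A p) ∈ {a : ∀ p, A p | ∀ p, p ≠ q → a p = 0} := by
      intro p hp
      exact Pi.single_eq_of_ne hp 1
    rw [← hnat q] at h1
    have h2 := congrFun (h1 y hy) q
    simpa [Pi.mul_apply, Pi.single_eq_same] using h2
  -- {r | f r p = 0} is "prime"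
  have hK : ∀ (p : {P : TwoSidedIdeal R // P.IsMinimalPrime'}) (a b : R), f b p ≠ 0 →
      (∀ r : R, f (a * r * b) p = 0) → f a p = 0 := by
    intro p a b hb hab
    set s0 : Set (A p) := {x | ∃ r : R, ∃ c : A p, x = f r p * (f b p * c)} with hs0
    set W := AddSubgroup.closure s0 with hW
    have hWl : ∀ r : R, ∀ w ∈ W, f r p * w ∈ W := by
      intro r w hw
      have hle : W ≤ AddSubgroup.comap (AddMonoidHom.mulLeft (f r p)) W := by
        rw [hW]
        apply (AddSubgroup.closure_le _).mpr
        rintro x ⟨r', c, rfl⟩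
        show f r p * (f r' p * (f b p * c)) ∈ W
        have heq : f r p * (f r' p * (f b p * c)) = f (r * r') p * (f b p * c) := by
          rw [map_mul, Pi.mul_apply, mul_assoc]
        rw [heq]
        exact AddSubgroup.subset_closure ⟨r * r', c, rfl⟩
      exact hle hw
    have hWr : ∀ c' : A p, ∀ w ∈ W, w * c' ∈ W := by
      intro c' w hw
      have hle : W ≤ AddSubgroup.comap (AddMonoidHom.mulRight c') W := by
        rw [hW]
        apply (AddSubgroup.closure_le _).mpr
        rintro x ⟨r', c, rfl⟩
        show f r' p * (f b p * c) * c' ∈ W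
        have heq : f r' p * (f b p * c) * c' = f r' p * (f b p * (c * c')) := by
          rw [mul_assoc, mul_assoc]
        rw [heq]
        exact AddSubgroup.subset_closure ⟨r', c * c', rfl⟩
      exact hle hw
    have hbW : f b p ∈ W := by
      apply AddSubgroup.subset_closure
      exact ⟨1, 1, by simp⟩
    rcases helem p W (fun r w hw => hWl r w hw) (fun c w hw => hWr c w hw) with hbot | htop
    · exact absurd (by rw [hbot] at hbW; exact (AddSubgroup.mem_bot.mp hbW)) hb
    · have hZ : W ≤ AddSubgroup.comap (AddMonoidHom.mulLeft (f a p)) (⊥ : AddSubgroup (A p)) := by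
        rw [hW]
        apply (AddSubgroup.closure_le _).mpr
        rintro x ⟨r', c, rfl⟩
        show f a p * (f r' p * (f b p * c)) ∈ (⊥ : AddSubgroup (A p))
        have heq : f a p * (f r' p * (f b p * c)) = f (a * r' * b) p * c := by
          rw [map_mul, map_mul, Pi.mul_apply, Pi.mul_apply, mul_assoc, mul_assoc]
        rw [AddSubgroup.mem_bot, heq, hab r', zero_mul]
      have h1W : (1 : A p) ∈ W := by rw [htop]; trivial
      have := hZ h1W
      rw [AddSubgroup.mem_comap, AddSubgroup.mem_bot] at this
      simpa using this
  -- elements of S have nonzero components everywhere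
  have hne : ∀ t ∈ S, ∀ p, f t p ≠ 0 := by
    intro t ht p0 h0
    have hq : ∀ q, q ≠ p0 → ∃ y ∈ q.1, f y p0 ≠ 0 := by
      intro q hqp
      by_contra hcon
      push_neg at hcon
      have hmem : (Pi.single p0 (1 : A p0) : ∀ p, A p) ∈
          {a : ∀ p, A p | ∀ r ∈ q.1, f r * a = 0} := by
        intro r hr
        funext p'
        by_cases hp' : p' = p0
        · subst hp'
          simp [Pi.mul_apply, Pi.single_eq_same, hcon r hr]
        · simp [Pi.mul_apply, Pi.single_eq_of_ne hp']
      rw [hnat q] at hmem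
      have := hmem p0 (fun h => hqp h.symm)
      rw [Pi.single_eq_same] at this
      exact one_ne_zero this
    have hfin' : Finite {P : TwoSidedIdeal R // P.IsMinimalPrime'} := hfin.to_subtype
    have : Fintype {P : TwoSidedIdeal R // P.IsMinimalPrime'} := Fintype.ofFinite _
    have key : ∀ T : Finset {P : TwoSidedIdeal R // P.IsMinimalPrime'},
        ∃ x : R, f x p0 ≠ 0 ∧ ∀ q ∈ T, q ≠ p0 → x ∈ q.1 := by
      intro T
      induction T using Finset.induction_on with
      | empty =>
        refine ⟨1, ?_, fun q hq => absurd hq (Finset.notMem_empty q)⟩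
        rw [map_one]
        exact one_ne_zero
      | @insert q T hqT ih =>
        obtain ⟨x, hx, hxT⟩ := ih
        by_cases hq0 : q = p0
        · refine ⟨x, hx, ?_⟩
          intro q' hq' hne'
          rcases Finset.mem_insert.mp hq' with rfl | hmem
          · exact absurd hq0 hne'
          · exact hxT q' hmem hne'
        · obtain ⟨y, hy, hfy⟩ := hq q hq0
          have hnall : ¬ ∀ r : R, f (x * r * y) p0 = 0 := fun h => hx (hK p0 x y hfy h)
          push_neg at hnall
          obtain ⟨r, hr⟩ := hnall
          refine ⟨x * r * y, hr, ?_⟩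
          intro q' hq' hne'
          rcases Finset.mem_insert.mp hq' with rfl | hmem
          · exact q'.1.mul_mem_left _ _ hy
          · exact q'.1.mul_mem_right _ _ (q'.1.mul_mem_right _ _ (hxT q' hmem hne'))
    obtain ⟨x, hx, hxall⟩ := key Finset.univ
    have hftx : f (t * x) = 0 := by
      funext q
      by_cases hq0 : q = p0
      · subst hq0
        rw [map_mul, Pi.mul_apply, h0, zero_mul]
        rfl
      · rw [map_mul, Pi.mul_apply, hPK q x (hxall q (Finset.mem_univ q) hq0), mul_zero]
        rfl
    have htx : t * x = 0 := hf (by rw [hftx, map_zero])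
    have hx0 : x = 0 := (hreg t ht).left (show t * x = t * 0 by rw [mul_zero, htx])
    rw [hx0, map_zero] at hx
    exact hx rfl
  -- left regularity of each component
  intro s hs
  have hlr : ∀ p, ∀ w : A p, f s p * w = 0 → w = 0 := by
    intro p w hw
    set W : AddSubgroup (A p) :=
      { carrier := {w : A p | ∃ t ∈ S, f t p * w = 0}
        zero_mem' := ⟨1, S.one_mem, by rw [mul_zero]⟩
        add_mem' := by
          rintro a b ⟨t1, ht1, ha⟩ ⟨t2, ht2, hb⟩
          obtain ⟨t', ht', r', heq⟩ := hOre t1 t2 ht2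
          refine ⟨t' * t1, S.mul_mem ht' ht1, ?_⟩
          have h1 : f (t' * t1) p * a = 0 := by
            rw [map_mul, Pi.mul_apply, mul_assoc, ha, mul_zero]
          have h2 : f (t' * t1) p * b = 0 := by
            rw [heq, map_mul, Pi.mul_apply, mul_assoc, hb, mul_zero]
          rw [mul_add, h1, h2, add_zero]
        neg_mem' := by
          rintro a ⟨t1, ht1, ha⟩
          exact ⟨t1, ht1, by rw [mul_neg, ha, neg_zero]⟩ } with hWdef
    have hWl : ∀ r : R, ∀ w ∈ W, f r p * w ∈ W := by
      rintro r w ⟨t, ht, hw'⟩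
      obtain ⟨t', ht', r', heq⟩ := hOre r t ht
      refine ⟨t', ht', ?_⟩
      have : f t' p * (f r p * w) = f r' p * (f t p * w) := by
        rw [← mul_assoc, ← Pi.mul_apply, ← map_mul, heq, map_mul, Pi.mul_apply, mul_assoc]
      rw [this, hw', mul_zero]
    have hWr : ∀ b : A p, ∀ w ∈ W, w * b ∈ W := by
      rintro b w ⟨t, ht, hw'⟩
      exact ⟨t, ht, by rw [← mul_assoc, hw', zero_mul]⟩
    rcases helem p W hWl hWr with hbot | htop
    · have : w ∈ W := ⟨s, hs, hw⟩
      rw [hbot] at this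
      exact AddSubgroup.mem_bot.mp this
    · exfalso
      have h1 : (1 : A p) ∈ W := by rw [htop]; trivial
      obtain ⟨t, ht, h1'⟩ := h1
      rw [mul_one] at h1'
      exact hne t ht p h1'
  -- each component is a unit
  have hunit : ∀ p, IsUnit (f s p) := by
    intro p
    have : IsSemisimpleRing (A p) := auxSemisimple'
    exact auxIsUnit' (f s p) (hlr p)
  refine isUnit_iff_exists.mpr ⟨fun p => ((hunit p).unit⁻¹ : (A p)ˣ).1, ?_, ?_⟩
  · funext p
    show f s p * ((hunit p).unit⁻¹ : (A p)ˣ).1 = 1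
    have h := (hunit p).unit.mul_inv
    rwa [IsUnit.unit_spec] at h
  · funext p
    show ((hunit p).unit⁻¹ : (A p)ˣ).1 * f s p = 1
    have h := (hunit p).unit.inv_mul
    rwa [IsUnit.unit_spec] at h
end

section
/- Let R be a semiprime ring and f : R → ∏_{i=1}^s A_i an injective ring homomorphism into a finite product of simple Artinian rings that is irredundant (no component can be omitted while preserving injectivity). Then s ≤ |min(R)|, the number of minimal prime ideals of R. In particular, if f : R → ∏_{i=1}^s A_i is injective with s > |min(R)|, then f is redundant. -/
/-!
Irredundancy gives, for each `i`, a nonzero `a i` whose image under `f` is supported in the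
`i`-th coordinate, so injectivity of `f` forces `a i * r * a j = 0` for `i ≠ j`. In a semiprime
ring every nonzero `a` lies outside some minimal prime: the sequence `a, a r₀ a, …`, with every
term nonzero by semiprimeness, is an m-system avoiding `0`; an ideal maximal among those
disjoint from it is prime, and by Zorn's lemma it contains a minimal prime. Minimal primes
chosen this way for `i ≠ j` differ, as a prime avoiding both `a i` and `a j` cannot contain
`a i R a j = 0`.
-/

def IsMSystem {R : Type*} [Ring R] (S : Set R) : Prop :=
  ∀ x ∈ S, ∀ y ∈ S, ∃ r, x * r * y ∈ S

namespace TwoSidedIdeal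

variable {R : Type*} [Ring R]

theorem mem_sSup_of_isChain {c : Set (TwoSidedIdeal R)} (hc : IsChain (· ≤ ·) c)
    (hne : c.Nonempty) {x : R} : x ∈ sSup c ↔ ∃ I ∈ c, x ∈ I := by
  refine ⟨fun hx => ?_, fun ⟨I, hI, hx⟩ => le_sSup hI hx⟩
  obtain ⟨I₀, hI₀⟩ := hne
  let U : TwoSidedIdeal R := .mk' {x | ∃ I ∈ c, x ∈ I} ⟨I₀, hI₀, zero_mem I₀⟩
    (fun ⟨I, hI, hx⟩ ⟨J, hJ, hy⟩ => by
      rcases hc.total hI hJ with h | h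
      · exact ⟨J, hJ, J.add_mem (h hx) hy⟩
      · exact ⟨I, hI, I.add_mem hx (h hy)⟩)
    (fun ⟨I, hI, hx⟩ => ⟨I, hI, I.neg_mem hx⟩)
    (fun ⟨I, hI, hy⟩ => ⟨I, hI, I.mul_mem_left _ _ hy⟩)
    (fun ⟨I, hI, hx⟩ => ⟨I, hI, I.mul_mem_right _ _ hx⟩)
  have hU : sSup c ≤ U := sSup_le fun I hI y hy => (mem_mk' _ _ _ _ _ _ _).2 ⟨I, hI, hy⟩
  simpa [U, mem_mk'] using hU hx

def colonLeft (I : TwoSidedIdeal R) (y : R) : TwoSidedIdeal R :=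
  .mk' {x | ∀ r, x * r * y ∈ I} (fun r => by simp)
    (fun hx hx' r => by simpa [add_mul] using I.add_mem (hx r) (hx' r))
    (fun hx r => by simpa using I.neg_mem (hx r))
    (fun {s x} hx r => by simpa [mul_assoc] using I.mul_mem_left s _ (hx r))
    (fun {x s} hx r => by simpa [mul_assoc] using hx (s * r))

def colonRight (I : TwoSidedIdeal R) (x : R) : TwoSidedIdeal R :=
  .mk' {y | ∀ r, x * r * y ∈ I} (fun r => by simp)
    (fun hy hy' r => by simpa [mul_add] using I.add_mem (hy r) (hy' r))
    (fun hy r => by simpa using I.neg_mem (hy r))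
    (fun {s y} hy r => by simpa [mul_assoc] using hy (r * s))
    (fun {y s} hy r => by simpa [mul_assoc] using I.mul_mem_right _ s (hy r))

theorem mem_colonLeft {I : TwoSidedIdeal R} {x y : R} :
    x ∈ I.colonLeft y ↔ ∀ r, x * r * y ∈ I :=
  mem_mk' _ _ _ _ _ _ _

theorem mem_colonRight {I : TwoSidedIdeal R} {x y : R} :
    y ∈ I.colonRight x ↔ ∀ r, x * r * y ∈ I :=
  mem_mk' _ _ _ _ _ _ _

theorem mul_mul_mem_of_mem_sup_span {I : TwoSidedIdeal R} {x y z w : R}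
    (hxy : ∀ r, x * r * y ∈ I) (hz : z ∈ I ⊔ span {x}) (hw : w ∈ I ⊔ span {y}) (r : R) :
    z * r * w ∈ I := by
  have hzy : z ∈ I.colonLeft y := by
    refine sup_le (fun i hi => mem_colonLeft.2 fun r => ?_) (span_le.2 ?_) hz
    · exact I.mul_mem_right _ _ (I.mul_mem_right _ _ hi)
    · simpa [mem_colonLeft] using hxy
  refine mem_colonRight.1 (sup_le (fun i hi => mem_colonRight.2 fun r => ?_) (span_le.2 ?_) hw) r
  · exact I.mul_mem_left _ _ hi
  · simpa [mem_colonRight] using mem_colonLeft.1 hzy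

theorem isPrime'_sInf_of_isChain {c : Set (TwoSidedIdeal R)} (hc : IsChain (· ≤ ·) c)
    (hne : c.Nonempty) (hprime : ∀ P ∈ c, P.IsPrime') : (sInf c).IsPrime' := by
  obtain ⟨P₀, hP₀⟩ := hne
  refine ⟨fun htop => (hprime P₀ hP₀).1 (top_le_iff.1 (htop ▸ sInf_le hP₀)), fun a b hab => ?_⟩
  by_contra! h
  obtain ⟨⟨P, hP, haP⟩, ⟨Q, hQ, hbQ⟩⟩ : (∃ P ∈ c, a ∉ P) ∧ ∃ Q ∈ c, b ∉ Q := by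
    simpa [mem_sInf] using h
  obtain ⟨S, hS, hSP, hSQ⟩ : ∃ S ∈ c, S ≤ P ∧ S ≤ Q := by
    rcases hc.total hP hQ with h | h
    exacts [⟨P, hP, le_rfl, h⟩, ⟨Q, hQ, h, le_rfl⟩]
  rcases (hprime S hS).2 a b (fun r => sInf_le hS (hab r)) with h | h
  exacts [haP (hSP h), hbQ (hSQ h)]

theorem exists_isMinimalPrime'_le {P : TwoSidedIdeal R} (hP : P.IsPrime') :
    ∃ Q : TwoSidedIdeal R, Q.IsMinimalPrime' ∧ Q ≤ P := by
  obtain ⟨Q, hQP, hQ⟩ := zorn_le_nonempty₀ (α := (TwoSidedIdeal R)ᵒᵈ)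
    {Q | (OrderDual.ofDual Q).IsPrime'}
    (fun c hc hchain Q hQ => ⟨sSup c, isPrime'_sInf_of_isChain hchain.symm ⟨Q, hQ⟩ hc,
      fun _ => le_sSup⟩)
    (OrderDual.toDual P) hP
  exact ⟨OrderDual.ofDual Q, ⟨hQ.prop, fun Q' hQ' hle => le_antisymm hle (hQ.2 hQ' hle)⟩, hQP⟩

theorem exists_isPrime'_le_of_disjoint {S : Set R} (hS : IsMSystem S) (hne : S.Nonempty)
    {I : TwoSidedIdeal R} (hI : Disjoint (I : Set R) S) :
    ∃ P : TwoSidedIdeal R, P.IsPrime' ∧ I ≤ P ∧ Disjoint (P : Set R) S := by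
  obtain ⟨M, hIM, hM⟩ := zorn_le_nonempty₀ {J : TwoSidedIdeal R | Disjoint (J : Set R) S}
    (fun c hc hchain J hJ => ⟨sSup c, Set.disjoint_left.2 fun x hx hxS => by
        obtain ⟨J', hJ', hxJ'⟩ := (mem_sSup_of_isChain hchain ⟨J, hJ⟩).1 hx
        exact Set.disjoint_left.1 (hc hJ') hxJ' hxS,
      fun _ => le_sSup⟩) I hI
  have hMS : Disjoint (M : Set R) S := hM.prop
  have meets : ∀ x ∉ M, ∃ s ∈ S, s ∈ M ⊔ span {x} := by
    intro x hx
    by_contra! h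
    exact hx (hM.le_of_ge (Set.disjoint_right.2 h) le_sup_left (mem_sup_right (subset_span rfl)))
  refine ⟨M, ⟨fun htop => ?_, fun x y hxy => ?_⟩, hIM, hMS⟩
  · obtain ⟨s, hs⟩ := hne
    exact Set.disjoint_right.1 hMS hs (by simp [htop])
  · by_contra! h
    obtain ⟨s, hs, hsM⟩ := meets x h.1
    obtain ⟨t, ht, htM⟩ := meets y h.2
    obtain ⟨r, hr⟩ := hS s hs t ht
    exact Set.disjoint_right.1 hMS hr (mul_mul_mem_of_mem_sup_span hxy hsM htM r)

end TwoSidedIdeal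

namespace IsSemiprimeRing'

variable {R : Type*} [Ring R]

theorem exists_isMSystem (hR : IsSemiprimeRing' R) {a : R} (ha : a ≠ 0) :
    ∃ S : Set R, IsMSystem S ∧ a ∈ S ∧ 0 ∉ S := by
  have hstep (x : {x : R // x ≠ 0}) : ∃ r, x.1 * r * x.1 ≠ 0 := by
    by_contra! h
    exact x.2 (hR x h)
  choose r hr using hstep
  let next : {x : R // x ≠ 0} → {x : R // x ≠ 0} := fun x => ⟨x * r x * x, hr x⟩
  let seq : ℕ → R := fun n => (next^[n] ⟨a, ha⟩).1
  have seq_succ (n : ℕ) : ∃ u, seq (n + 1) = seq n * u * seq n :=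
    ⟨_, by simp only [seq, Function.iterate_succ_apply']; rfl⟩
  have seq_mem_sandwich (n k : ℕ) (hnk : n + 1 ≤ k) : ∃ u, seq k = seq n * u * seq n := by
    induction k, hnk using Nat.le_induction with
    | base => exact seq_succ n
    | succ k _ ih =>
      obtain ⟨u, hu⟩ := ih
      obtain ⟨v, hv⟩ := seq_succ k
      exact ⟨u * seq n * v * seq n * u, by rw [hv, hu]; simp only [mul_assoc]⟩
  refine ⟨Set.range seq, ?_, ⟨0, rfl⟩, fun ⟨n, hn⟩ => (next^[n] ⟨a, ha⟩).2 hn⟩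
  rintro _ ⟨n, rfl⟩ _ ⟨m, rfl⟩
  obtain ⟨u, hu⟩ := seq_mem_sandwich n (max n m + 1) (by omega)
  obtain ⟨v, hv⟩ := seq_mem_sandwich m (max n m + 1) (by omega)
  obtain ⟨w, hw⟩ := seq_succ (max n m + 1)
  refine ⟨u * seq n * w * seq m * v, max n m + 2, ?_⟩
  rw [hw]
  nth_rewrite 1 [hu]
  rw [hv]
  simp only [mul_assoc]

theorem exists_isMinimalPrime'_not_mem (hR : IsSemiprimeRing' R) {a : R} (ha : a ≠ 0) :
    ∃ P : TwoSidedIdeal R, P.IsMinimalPrime' ∧ a ∉ P := by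
  obtain ⟨S, hS, haS, h0S⟩ := hR.exists_isMSystem ha
  obtain ⟨P, hP, -, hPS⟩ := TwoSidedIdeal.exists_isPrime'_le_of_disjoint hS ⟨a, haS⟩
    (I := ⊥) (by simpa using h0S)
  obtain ⟨Q, hQ, hQP⟩ := TwoSidedIdeal.exists_isMinimalPrime'_le hP
  exact ⟨Q, hQ, fun haQ => Set.disjoint_left.1 hPS (hQP haQ) haS⟩

theorem exists_injective_of_pairwise_orthogonal (hR : IsSemiprimeRing' R) {ι : Type*}
    {a : ι → R} (ha : ∀ i, a i ≠ 0) (horth : Pairwise fun i j => ∀ r, a i * r * a j = 0) :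
    ∃ g : ι → {P : TwoSidedIdeal R // P.IsMinimalPrime'}, Function.Injective g := by
  choose P hP haP using fun i => hR.exists_isMinimalPrime'_not_mem (ha i)
  refine ⟨fun i => ⟨P i, hP i⟩, fun i j hij => ?_⟩
  by_contra hne
  have hPij : P i = P j := congrArg Subtype.val hij
  rcases (hP j).1.2 (a i) (a j) (fun r => horth hne r ▸ zero_mem _) with h | h
  exacts [haP i (hPij ▸ h), haP j h]

end IsSemiprimeRing'

section Irredundant

variable {R : Type*} [Ring R] {ι : Type*} {A : ι → Type*} [∀ i, Ring (A i)]

theorem exists_ne_zero_forall_ne_apply_eq_zero (f : R →+* ∀ i, A i) {i : ι}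
    (hi : ¬ Function.Injective (fun r : R => fun j : {j : ι // j ≠ i} => f r j.1)) :
    ∃ a : R, a ≠ 0 ∧ ∀ j ≠ i, f a j = 0 := by
  obtain ⟨x, y, hxy, hne⟩ := Function.not_injective_iff.mp hi
  refine ⟨x - y, sub_ne_zero.mpr hne, fun j hj => ?_⟩
  simpa [sub_eq_zero] using congrFun hxy ⟨j, hj⟩

theorem exists_pairwise_orthogonal_of_irredundant {f : R →+* ∀ i, A i}
    (hf : Function.Injective f)
    (hirr : ∀ i, ¬ Function.Injective (fun r : R => fun j : {j : ι // j ≠ i} => f r j.1)) :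
    ∃ a : ι → R, (∀ i, a i ≠ 0) ∧ Pairwise fun i j => ∀ r, a i * r * a j = 0 := by
  choose a ha0 haz using fun i => exists_ne_zero_forall_ne_apply_eq_zero f (hirr i)
  refine ⟨a, ha0, fun i j hij r => hf ?_⟩
  funext k
  by_cases hki : k = i
  · simp [haz j k (hki ▸ hij)]
  · simp [haz i k hki]

end Irredundant

theorem stmt_18_general {R : Type u_1} [Ring R] (hsp : IsSemiprimeRing' R) (s : ℕ)
    (A : Fin s → Type u_2)
    [∀ i, Ring (A i)]
    (f : R →+* ∀ i, A i) (hf : Function.Injective f) :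
    ((∀ i : Fin s,
        ¬ Function.Injective (fun r : R => fun j : {j : Fin s // j ≠ i} => f r j.1)) →
      ∃ g : Fin s → {P : TwoSidedIdeal R // P.IsMinimalPrime'}, Function.Injective g) ∧
    (∀ hfin : {P : TwoSidedIdeal R | P.IsMinimalPrime'}.Finite, hfin.toFinset.card < s →
      ∃ i : Fin s,
        Function.Injective (fun r : R => fun j : {j : Fin s // j ≠ i} => f r j.1)) := by
  have embeds_of_irredundant : (∀ i : Fin s,
      ¬ Function.Injective (fun r : R => fun j : {j : Fin s // j ≠ i} => f r j.1)) →
      ∃ g : Fin s → {P : TwoSidedIdeal R // P.IsMinimalPrime'}, Function.Injective g := by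
    intro hirr
    obtain ⟨a, ha, horth⟩ := exists_pairwise_orthogonal_of_irredundant hf hirr
    exact hsp.exists_injective_of_pairwise_orthogonal ha horth
  refine ⟨embeds_of_irredundant, fun hfin hcard => ?_⟩
  by_contra! hred
  obtain ⟨g, hg⟩ := embeds_of_irredundant hred
  have : Finite {P : TwoSidedIdeal R | P.IsMinimalPrime'} := hfin.to_subtype
  have hle : Nat.card (Fin s) ≤ Nat.card {P : TwoSidedIdeal R | P.IsMinimalPrime'} :=
    Nat.card_le_card_of_injective g hg
  rw [Nat.card_fin, Nat.card_coe_set_eq, Set.ncard_eq_toFinset_card _ hfin] at hle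
  omega

/-- Let `R` be semiprime and `f : R → ∏_{i=1}^s A i` an injective ring homomorphism into
a finite product of simple Artinian rings. If `f` is irredundant (omitting any component
destroys injectivity), then `s ≤ |min(R)|` (there is an injection `Fin s ↪ min(R)`);
in particular, if `min(R)` is finite with fewer than `s` elements, then `f` is
redundant. -/
theorem stmt_18 {R : Type u_1} [Ring R] (hsp : IsSemiprimeRing' R) (s : ℕ)
    (A : Fin s → Type u_2)
    [∀ i, Ring (A i)] [∀ i, IsSimpleRing (A i)] [∀ i, IsArtinianRing (A i)]
    (f : R →+* ∀ i, A i) (hf : Function.Injective f) :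
    ((∀ i : Fin s,
        ¬ Function.Injective (fun r : R => fun j : {j : Fin s // j ≠ i} => f r j.1)) →
      ∃ g : Fin s → {P : TwoSidedIdeal R // P.IsMinimalPrime'}, Function.Injective g) ∧
    (∀ hfin : {P : TwoSidedIdeal R | P.IsMinimalPrime'}.Finite, hfin.toFinset.card < s →
      ∃ i : Fin s,
        Function.Injective (fun r : R => fun j : {j : Fin s // j ≠ i} => f r j.1)) :=
  stmt_18_general hsp s A f hf
end
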